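/- arXiv:2008.00416 — 2 statements merged into one kernel-verified Lean document; each statement's English description precedes it below -/
import Mathlib

section
/- Let k ≥ 1 be an integer and let r_1, …, r_{k+1} be nonnegative real numbers with r_1 + ⋯ + r_{k+1} = 1. Then ∑_{j=1}^{k+1} (1 - r_j)^{k+1} r_j ≤ (1 + e^{-1/2})/2. -/
/-- Key combinatorial estimate for the convergence of Model B:
if `r₁ + ⋯ + r_{k+1} = 1` with `r_j ≥ 0` and `k ≥ 1`, then
`∑_j (1 - r_j)^{k+1} r_j ≤ (1 + e^{-1/2})/2`. -/
theorem sum_one_sub_pow_mul_le (k : ℕ) (hk : 1 ≤ k) (r : Fin (k + 1) → ℝ)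
    (hr : ∀ j, 0 ≤ r j) (hsum : ∑ j, r j = 1) :
    ∑ j, (1 - r j) ^ (k + 1) * r j ≤ (1 + Real.exp (-(1 / 2))) / 2 := by
  have hnpos : (0:ℝ) < (k + 1 : ℕ) := by positivity
  set c : ℝ := 1 / (2 * (k + 1 : ℕ)) with hc
  have hcpos : 0 < c := by positivity
  have hr1 : ∀ j, r j ≤ 1 := by
    intro j
    calc r j ≤ ∑ i, r i := Finset.single_le_sum (fun i _ => hr i) (Finset.mem_univ j)
    _ = 1 := hsum
  set E : ℝ := Real.exp (-(1/2)) with hE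
  have hEpos : 0 < E := Real.exp_pos _
  have hE1 : E ≤ 1 := Real.exp_le_one_iff.mpr (by norm_num)
  have hkey : (1 - c) ^ (k + 1) ≤ E := by
    have hc1 : c ≤ 1 := by
      rw [hc, div_le_one (by positivity)]
      have : (1:ℝ) ≤ (k + 1 : ℕ) := by exact_mod_cast Nat.le_add_left 1 k
      linarith
    have h1 : 1 - c ≤ Real.exp (-c) := by
      have := Real.add_one_le_exp (-c); linarith
    calc (1 - c) ^ (k + 1) ≤ (Real.exp (-c)) ^ (k + 1) :=
          pow_le_pow_left₀ (by linarith) h1 _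
      _ = Real.exp ((k + 1 : ℕ) * (-c)) := by rw [← Real.exp_nat_mul]
      _ = E := by
          rw [hE]; congr 1
          rw [hc]; field_simp
  set S : Finset (Fin (k + 1)) := Finset.univ.filter (fun j => c ≤ r j) with hS
  have hsplit :
      ∑ j, (1 - r j) ^ (k + 1) * r j
        = ∑ j ∈ S, (1 - r j) ^ (k + 1) * r j + ∑ j ∈ Sᶜ, (1 - r j) ^ (k + 1) * r j :=
    (Finset.sum_add_sum_compl S _).symm
  have hsumsplit : ∑ j ∈ S, r j + ∑ j ∈ Sᶜ, r j = 1 := by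
    rw [Finset.sum_add_sum_compl, hsum]
  have hbS : ∑ j ∈ S, (1 - r j) ^ (k + 1) * r j ≤ E * ∑ j ∈ S, r j := by
    rw [Finset.mul_sum]
    apply Finset.sum_le_sum
    intro j hj
    have hjc : c ≤ r j := (Finset.mem_filter.mp hj).2
    have h1 : (1 - r j) ^ (k + 1) ≤ (1 - c) ^ (k + 1) :=
      pow_le_pow_left₀ (by have := hr1 j; linarith) (by linarith) _
    have h2 : (1 - r j) ^ (k + 1) ≤ E := le_trans h1 hkey
    exact mul_le_mul_of_nonneg_right h2 (hr j)
  have hbSc : ∑ j ∈ Sᶜ, (1 - r j) ^ (k + 1) * r j ≤ ∑ j ∈ Sᶜ, r j := by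
    apply Finset.sum_le_sum
    intro j _
    have h0 : 0 ≤ 1 - r j := by have := hr1 j; linarith
    have h1 : (1 - r j) ^ (k + 1) ≤ 1 := pow_le_one₀ h0 (by have := hr j; linarith)
    exact mul_le_of_le_one_left (hr j) h1
  have hmass : ∑ j ∈ Sᶜ, r j ≤ 1 / 2 := by
    calc ∑ j ∈ Sᶜ, r j ≤ ∑ _j ∈ Sᶜ, c := by
          apply Finset.sum_le_sum
          intro j hj
          have : ¬ c ≤ r j := by
            have := Finset.mem_compl.mp hj
            simpa [hS] using this
          linarith
      _ = (Sᶜ).card * c := by rw [Finset.sum_const, nsmul_eq_mul]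
      _ ≤ (k + 1 : ℕ) * c := by
          have : (Sᶜ).card ≤ k + 1 := by
            simpa using Finset.card_le_card (Finset.subset_univ (Sᶜ))
          have h2 : ((Sᶜ).card : ℝ) ≤ (k + 1 : ℕ) := by exact_mod_cast this
          nlinarith
      _ = 1 / 2 := by rw [hc]; field_simp
  have hs : 1 / 2 ≤ ∑ j ∈ S, r j := by linarith
  calc ∑ j, (1 - r j) ^ (k + 1) * r j
      ≤ E * ∑ j ∈ S, r j + ∑ j ∈ Sᶜ, r j := by rw [hsplit]; linarith
    _ ≤ (1 + E) / 2 := by nlinarith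
end

section
/- Let s ∈ (0,1), p ∈ [1,∞) with sp < 1, and let B = (0,ℓ₁) × (0,ℓ₂) ⊂ ℝ² be an open rectangle. Then ∫_B ∫_{B^c} |x - y|^{-(2+sp)} dy dx ≤ C · Per(B) · min{ℓ₁, ℓ₂}^{1-sp}, where Per(B) = 2(ℓ₁+ℓ₂) and C depends only on s, p. -/
open MeasureTheory

/-- The open rectangle `(0,ℓ₁) × (0,ℓ₂)` in the plane. -/
def planeRect (ℓ₁ ℓ₂ : ℝ) : Set (EuclideanSpace ℝ (Fin 2)) :=
  {x | x 0 ∈ Set.Ioo 0 ℓ₁ ∧ x 1 ∈ Set.Ioo 0 ℓ₂}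

/-!
For `x ∈ B` let `d(x)` be its distance to `∂B`. Then `Bᶜ` lies outside the ball of radius `d(x)`
around `x`, and in polar coordinates the kernel `|x - y|^{-(2+q)}`, `q = sp`, integrates over the
outside of that ball to `2π d(x)^{-q} / q`. Bounding `d(x)^{-q}` by the sum of the `(-q)`-th powers
of the distances to the four sides, the outer integral splits into one-dimensional integrals
`∫₀^ℓ t^{-q} dt = ℓ^{1-q} / (1-q)`, finite because `q < 1`. This leaves
`ℓ₂ ℓ₁^{1-q} + ℓ₁ ℓ₂^{1-q} ≤ 2 max(ℓ₁,ℓ₂) min(ℓ₁,ℓ₂)^{1-q}`.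
-/

open Set Real Module Metric

section Radial

variable {n : ℕ} {q m : ℝ}

lemma pow_sub_one_mul_rpow_neg_add (hn : 1 ≤ n) {t : ℝ} (ht : 0 < t) :
    t ^ (n - 1) * t ^ (-(n + q)) = t ^ (-(1 + q)) := by
  rw [← rpow_natCast, ← rpow_add ht, Nat.cast_sub hn]
  ring_nf

lemma pow_sub_one_smul_indicator_rpow (hn : 1 ≤ n) {t : ℝ} (ht : t ∈ Ioi 0) :
    t ^ (n - 1) • (Ici m).indicator (fun t => t ^ (-(n + q))) t =
      (Ici m).indicator (fun t => t ^ (-(1 + q))) t := by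
  by_cases htm : t ∈ Ici m
  · simp only [indicator_of_mem htm, smul_eq_mul, pow_sub_one_mul_rpow_neg_add hn ht]
  · simp [indicator_of_notMem htm]

lemma integrableOn_Ici_rpow_neg_one_sub (hq : 0 < q) (hm : 0 < m) :
    IntegrableOn (fun t : ℝ => t ^ (-(1 + q))) (Ici m) := by
  rw [integrableOn_Ici_iff_integrableOn_Ioi]
  exact integrableOn_Ioi_rpow_of_lt (by linarith) hm

end Radial

lemma compl_ball_indicator_norm_sub_rpow {E : Type*} [SeminormedAddCommGroup E] (x : E)
    (m r : ℝ) :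
    (ball x m)ᶜ.indicator (fun y => ‖x - y‖ ^ r) =
      fun y => (Ici m).indicator (fun t => t ^ r) ‖y - x‖ := by
  ext y
  simp only [indicator, mem_compl_iff, mem_ball, dist_eq_norm, not_lt, mem_Ici,
    norm_sub_rev x y]

section Tail

variable {E : Type*} [NormedAddCommGroup E] [NormedSpace ℝ E] [FiniteDimensional ℝ E]
  [MeasurableSpace E] [BorelSpace E] [Nontrivial E] (μ : Measure E) [μ.IsAddHaarMeasure]
  {q m : ℝ}

lemma integrable_indicator_norm_rpow (hq : 0 < q) (hm : 0 < m) :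
    Integrable (fun y : E => (Ici m).indicator (fun t => t ^ (-(finrank ℝ E + q))) ‖y‖) μ := by
  rw [integrable_fun_norm_addHaar, integrableOn_congr_fun
    (fun t => pow_sub_one_smul_indicator_rpow finrank_pos) measurableSet_Ioi]
  exact ((integrable_indicator_iff measurableSet_Ici).2
    (integrableOn_Ici_rpow_neg_one_sub hq hm)).integrableOn

lemma integral_indicator_norm_rpow (hq : 0 < q) (hm : 0 < m) :
    ∫ y : E, (Ici m).indicator (fun t => t ^ (-(finrank ℝ E + q))) ‖y‖ ∂μ =
      finrank ℝ E * μ.real (ball 0 1) * (m ^ (-q) / q) := by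
  rw [integral_fun_norm_addHaar, setIntegral_congr_fun measurableSet_Ioi
    (fun t => pow_sub_one_smul_indicator_rpow finrank_pos),
    setIntegral_indicator measurableSet_Ici,
    inter_eq_self_of_subset_right (Ici_subset_Ioi.2 hm), integral_Ici_eq_integral_Ioi,
    integral_Ioi_rpow_of_lt (by linarith) hm]
  simp only [nsmul_eq_mul, smul_eq_mul]
  ring_nf

lemma integrableOn_compl_ball_norm_sub_rpow (x : E) (hq : 0 < q) (hm : 0 < m) :
    IntegrableOn (fun y => ‖x - y‖ ^ (-(finrank ℝ E + q))) (ball x m)ᶜ μ := by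
  rw [← integrable_indicator_iff measurableSet_ball.compl, compl_ball_indicator_norm_sub_rpow]
  exact (integrable_indicator_norm_rpow μ hq hm).comp_sub_right x

lemma setIntegral_compl_ball_norm_sub_rpow (x : E) (hq : 0 < q) (hm : 0 < m) :
    ∫ y in (ball x m)ᶜ, ‖x - y‖ ^ (-(finrank ℝ E + q)) ∂μ =
      finrank ℝ E * μ.real (ball 0 1) * (m ^ (-q) / q) := by
  rw [← integral_indicator measurableSet_ball.compl, compl_ball_indicator_norm_sub_rpow,
    integral_sub_right_eq_self (fun y => (Ici m).indicator _ ‖y‖) x,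
    integral_indicator_norm_rpow μ hq hm]

end Tail

section OneDim

variable {q ℓ : ℝ}

lemma intervalIntegrable_rpow_neg (hq : q < 1) :
    IntervalIntegrable (fun t => t ^ (-q)) volume 0 ℓ :=
  intervalIntegral.intervalIntegrable_rpow' (by linarith)

lemma intervalIntegrable_sub_rpow_neg (hq : q < 1) :
    IntervalIntegrable (fun t => (ℓ - t) ^ (-q)) volume 0 ℓ := by
  simpa using ((intervalIntegrable_rpow_neg (ℓ := ℓ) hq).comp_sub_left ℓ).symm

lemma integrableOn_Ioo_rpow_add_rpow_sub (hq : q < 1) (hℓ : 0 ≤ ℓ) :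
    IntegrableOn (fun t => t ^ (-q) + (ℓ - t) ^ (-q)) (Ioo 0 ℓ) :=
  (intervalIntegrable_iff_integrableOn_Ioo_of_le hℓ).1
    ((intervalIntegrable_rpow_neg hq).add (intervalIntegrable_sub_rpow_neg hq))

lemma integral_Ioo_rpow_add_rpow_sub (hq : q < 1) (hℓ : 0 ≤ ℓ) :
    ∫ t in Ioo 0 ℓ, (t ^ (-q) + (ℓ - t) ^ (-q)) = 2 * (ℓ ^ (1 - q) / (1 - q)) := by
  rw [← integral_Ioc_eq_integral_Ioo, ← intervalIntegral.integral_of_le hℓ,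
    intervalIntegral.integral_add (intervalIntegrable_rpow_neg hq)
      (intervalIntegrable_sub_rpow_neg hq),
    intervalIntegral.integral_comp_sub_left (fun t => t ^ (-q)), sub_self, sub_zero,
    integral_rpow (.inl (by linarith)), zero_rpow (by linarith), sub_zero,
    neg_add_eq_sub]
  ring

end OneDim

lemma mul_rpow_add_mul_rpow_le {a b r : ℝ} (ha : 0 < a) (hb : 0 < b) (hr : r ≤ 1) :
    b * a ^ r + a * b ^ r ≤ 2 * max a b * min a b ^ r := by
  wlog hab : a ≤ b generalizing a b
  · simpa [add_comm, max_comm, min_comm] using this hb ha (le_of_not_ge hab)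
  rw [max_eq_right hab, min_eq_left hab]
  have key : a * b ^ r ≤ b * a ^ r := by
    have hsplit : ∀ c : ℝ, 0 < c → c = c ^ (1 - r) * c ^ r := fun c hc => by
      rw [← rpow_add hc, sub_add_cancel, rpow_one]
    calc a * b ^ r = a ^ (1 - r) * a ^ r * b ^ r := by rw [← hsplit a ha]
      _ ≤ b ^ (1 - r) * a ^ r * b ^ r := by gcongr
      _ = b * a ^ r := by rw [mul_right_comm, ← hsplit b hb]
  linarith

def planeRectBoundaryDist (ℓ₁ ℓ₂ : ℝ) (x : EuclideanSpace ℝ (Fin 2)) : ℝ :=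
  min (min (x 0) (ℓ₁ - x 0)) (min (x 1) (ℓ₂ - x 1))

section PlaneRect

variable {ℓ₁ ℓ₂ : ℝ}

lemma planeRectBoundaryDist_pos {x : EuclideanSpace ℝ (Fin 2)} (hx : x ∈ planeRect ℓ₁ ℓ₂) :
    0 < planeRectBoundaryDist ℓ₁ ℓ₂ x := by
  obtain ⟨⟨h₀, h₁⟩, h₂, h₃⟩ := hx
  exact lt_min (lt_min h₀ (sub_pos.2 h₁)) (lt_min h₂ (sub_pos.2 h₃))

lemma ball_planeRectBoundaryDist_subset (x : EuclideanSpace ℝ (Fin 2)) :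
    ball x (planeRectBoundaryDist ℓ₁ ℓ₂ x) ⊆ planeRect ℓ₁ ℓ₂ := by
  intro y hy
  have hcoord : ∀ i, |y i - x i| < planeRectBoundaryDist ℓ₁ ℓ₂ x := fun i =>
    calc |y i - x i| = ‖(y - x) i‖ := by simp [Real.norm_eq_abs]
      _ ≤ ‖y - x‖ := PiLp.norm_apply_le _ i
      _ < _ := by rwa [← dist_eq_norm]
  have hd : planeRectBoundaryDist ℓ₁ ℓ₂ x ≤ x 0 ∧ planeRectBoundaryDist ℓ₁ ℓ₂ x ≤ ℓ₁ - x 0 ∧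
      planeRectBoundaryDist ℓ₁ ℓ₂ x ≤ x 1 ∧ planeRectBoundaryDist ℓ₁ ℓ₂ x ≤ ℓ₂ - x 1 := by
    simp only [planeRectBoundaryDist, min_le_iff, le_refl, true_or, or_true, and_self]
  have h₀ := abs_sub_lt_iff.1 (hcoord 0)
  have h₁ := abs_sub_lt_iff.1 (hcoord 1)
  exact ⟨⟨by linarith, by linarith⟩, by linarith, by linarith⟩

lemma rpow_min_le_add {a b : ℝ} (ha : 0 ≤ a) (hb : 0 ≤ b) (r : ℝ) :
    min a b ^ r ≤ a ^ r + b ^ r := by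
  rcases min_choice a b with h | h <;> rw [h]
  · linarith [rpow_nonneg hb r]
  · linarith [rpow_nonneg ha r]

lemma planeRectBoundaryDist_rpow_le {x : EuclideanSpace ℝ (Fin 2)}
    (hx : x ∈ planeRect ℓ₁ ℓ₂) (r : ℝ) :
    planeRectBoundaryDist ℓ₁ ℓ₂ x ^ r ≤
      (x 0 ^ r + (ℓ₁ - x 0) ^ r) + (x 1 ^ r + (ℓ₂ - x 1) ^ r) := by
  obtain ⟨⟨h₀, h₁⟩, h₂, h₃⟩ := hx
  refine (rpow_min_le_add (le_min h₀.le (by linarith)) (le_min h₂.le (by linarith)) r).trans ?_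
  gcongr <;> exact rpow_min_le_add (by linarith) (by linarith) r

lemma setIntegral_compl_planeRect_le {q : ℝ} (hq : 0 < q) {x : EuclideanSpace ℝ (Fin 2)}
    (hx : x ∈ planeRect ℓ₁ ℓ₂) :
    ∫ y in (planeRect ℓ₁ ℓ₂)ᶜ, ‖x - y‖ ^ (-(2 + q)) ≤
      2 * π / q * ((x 0 ^ (-q) + (ℓ₁ - x 0) ^ (-q)) + (x 1 ^ (-q) + (ℓ₂ - x 1) ^ (-q))) := by
  set d := planeRectBoundaryDist ℓ₁ ℓ₂ x
  have hd : 0 < d := planeRectBoundaryDist_pos hx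
  have hint := integrableOn_compl_ball_norm_sub_rpow volume x hq hd
  have hval := setIntegral_compl_ball_norm_sub_rpow volume x hq hd
  simp only [finrank_euclideanSpace_fin, Nat.cast_ofNat, Measure.real,
    EuclideanSpace.volume_ball_fin_two, ENNReal.ofReal_one, one_pow, one_mul,
    ENNReal.toReal_ofReal pi_pos.le] at hint hval
  calc ∫ y in (planeRect ℓ₁ ℓ₂)ᶜ, ‖x - y‖ ^ (-(2 + q))
      ≤ ∫ y in (ball x d)ᶜ, ‖x - y‖ ^ (-(2 + q)) :=
        setIntegral_mono_set hint (.of_forall fun _ => rpow_nonneg (norm_nonneg _) _)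
          (.of_forall (compl_subset_compl.2 (ball_planeRectBoundaryDist_subset x)))
    _ = 2 * π / q * d ^ (-q) := by
        rw [hval]; ring
    _ ≤ _ := by gcongr; exact planeRectBoundaryDist_rpow_le hx _

def planeEquiv : ℝ × ℝ ≃ᵐ EuclideanSpace ℝ (Fin 2) :=
  MeasurableEquiv.finTwoArrow.symm.trans (MeasurableEquiv.toLp 2 (Fin 2 → ℝ))

@[simp]
lemma planeEquiv_apply_zero (z : ℝ × ℝ) : planeEquiv z 0 = z.1 := rfl

@[simp]
lemma planeEquiv_apply_one (z : ℝ × ℝ) : planeEquiv z 1 = z.2 := rfl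

lemma measurePreserving_planeEquiv : MeasurePreserving planeEquiv :=
  (volume_preserving_finTwoArrow ℝ).symm.trans (PiLp.volume_preserving_toLp (Fin 2))

lemma planeEquiv_preimage_planeRect :
    planeEquiv ⁻¹' planeRect ℓ₁ ℓ₂ = Ioo 0 ℓ₁ ×ˢ Ioo 0 ℓ₂ := by
  ext z
  simp [planeRect]

lemma measurableSet_planeRect : MeasurableSet (planeRect ℓ₁ ℓ₂) :=
  (measurableSet_Ioo.preimage (by fun_prop)).inter (measurableSet_Ioo.preimage (by fun_prop))

lemma integrableOn_planeRect_add {u v : ℝ → ℝ} (hu : IntegrableOn u (Ioo 0 ℓ₁))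
    (hv : IntegrableOn v (Ioo 0 ℓ₂)) :
    IntegrableOn (fun x : EuclideanSpace ℝ (Fin 2) => u (x 0) + v (x 1)) (planeRect ℓ₁ ℓ₂) := by
  rw [← measurePreserving_planeEquiv.integrableOn_comp_preimage planeEquiv.measurableEmbedding,
    planeEquiv_preimage_planeRect, IntegrableOn, Measure.volume_eq_prod, ← Measure.prod_restrict]
  exact (hu.comp_fst _).add (hv.comp_snd _)

lemma integral_planeRect_add {u v : ℝ → ℝ} (hu : IntegrableOn u (Ioo 0 ℓ₁))
    (hv : IntegrableOn v (Ioo 0 ℓ₂)) (hℓ₁ : 0 ≤ ℓ₁) (hℓ₂ : 0 ≤ ℓ₂) :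
    ∫ x in planeRect ℓ₁ ℓ₂, (u (x 0) + v (x 1)) =
      ℓ₂ * (∫ t in Ioo 0 ℓ₁, u t) + ℓ₁ * ∫ t in Ioo 0 ℓ₂, v t := by
  rw [← measurePreserving_planeEquiv.setIntegral_preimage_emb planeEquiv.measurableEmbedding,
    planeEquiv_preimage_planeRect, Measure.volume_eq_prod, ← Measure.prod_restrict]
  simp only [planeEquiv_apply_zero, planeEquiv_apply_one]
  rw [integral_add (hu.comp_fst _) (hv.comp_snd _), integral_fun_fst, integral_fun_snd]
  simp [Measure.real, hℓ₁, hℓ₂, smul_eq_mul]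

end PlaneRect

/-- Nonlocal boundary estimate: for `s ∈ (0,1)`, `p ∈ [1,∞)` with `sp < 1`
and the rectangle `B = (0,ℓ₁) × (0,ℓ₂)`, one has
`∫_B ∫_{Bᶜ} |x-y|^{-(2+sp)} dy dx ≤ C Per(B) min(ℓ₁,ℓ₂)^{1-sp}`
with `C = C(s,p)` and `Per(B) = 2(ℓ₁+ℓ₂)`. -/
theorem nonlocal_boundary_estimate (s p : ℝ) (hs : s ∈ Set.Ioo (0 : ℝ) 1)
    (hp : 1 ≤ p) (hsp : s * p < 1) :
    ∃ C > (0 : ℝ), ∀ ℓ₁ ℓ₂ : ℝ, 0 < ℓ₁ → 0 < ℓ₂ →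
      (∫ x in planeRect ℓ₁ ℓ₂, ∫ y in (planeRect ℓ₁ ℓ₂)ᶜ,
          ‖x - y‖ ^ (-(2 + s * p))) ≤
        C * (2 * (ℓ₁ + ℓ₂)) * (min ℓ₁ ℓ₂) ^ (1 - s * p) := by
  set q := s * p
  have hq : 0 < q := mul_pos hs.1 (by linarith)
  have hr : 0 < 1 - q := by linarith
  refine ⟨4 * π / (q * (1 - q)), by positivity, fun ℓ₁ ℓ₂ hℓ₁ hℓ₂ => ?_⟩
  have hu := integrableOn_Ioo_rpow_add_rpow_sub hsp hℓ₁.le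
  have hv := integrableOn_Ioo_rpow_add_rpow_sub hsp hℓ₂.le
  calc (∫ x in planeRect ℓ₁ ℓ₂, ∫ y in (planeRect ℓ₁ ℓ₂)ᶜ, ‖x - y‖ ^ (-(2 + q)))
      ≤ ∫ x in planeRect ℓ₁ ℓ₂,
          2 * π / q * ((x 0 ^ (-q) + (ℓ₁ - x 0) ^ (-q)) + (x 1 ^ (-q) + (ℓ₂ - x 1) ^ (-q))) :=
        integral_mono_of_nonneg
          (.of_forall fun _ => integral_nonneg fun _ => rpow_nonneg (norm_nonneg _) _)
          ((integrableOn_planeRect_add hu hv).const_mul _)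
          ((ae_restrict_iff' measurableSet_planeRect).2
            (.of_forall fun _ hx => setIntegral_compl_planeRect_le hq hx))
    _ = 2 * π / q * (2 * (ℓ₂ * ℓ₁ ^ (1 - q) + ℓ₁ * ℓ₂ ^ (1 - q)) / (1 - q)) := by
        rw [integral_const_mul, integral_planeRect_add hu hv hℓ₁.le hℓ₂.le,
          integral_Ioo_rpow_add_rpow_sub hsp hℓ₁.le, integral_Ioo_rpow_add_rpow_sub hsp hℓ₂.le]
        ring
    _ ≤ 2 * π / q * (2 * (2 * (ℓ₁ + ℓ₂) * min ℓ₁ ℓ₂ ^ (1 - q)) / (1 - q)) := by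
        gcongr
        refine (mul_rpow_add_mul_rpow_le hℓ₁ hℓ₂ (by linarith)).trans ?_
        gcongr
        exact max_le (by linarith) (by linarith)
    _ = 4 * π / (q * (1 - q)) * (2 * (ℓ₁ + ℓ₂)) * min ℓ₁ ℓ₂ ^ (1 - q) := by
        field_simp; norm_num
end
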